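/- arXiv:0707.4580 — 4 statements merged into one kernel-verified Lean document; each statement's English description precedes it below -/
import Mathlib

section
/- For every integer c ≥ 2 and every integer d ≥ 1, there exists a c-edge-colored graph G with δ_mon(G) = d that has no properly colored cycle. -/
/-- The number of edges of color `i` incident with the vertex `x` in the
`c`-edge-colored graph `(G, χ)`. -/
noncomputable def monDeg {V : Type} {c : ℕ} (G : SimpleGraph V) (χ : Sym2 V → Fin c)
    (x : V) (i : Fin c) : ℕ :=
  Nat.card {y : V // G.Adj x y ∧ χ s(x, y) = i}

/-- The minimum monochromatic degree `δ_mon(G)` of a `c`-edge-colored graph. -/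
noncomputable def minMonDeg {V : Type} {c : ℕ} (G : SimpleGraph V) (χ : Sym2 V → Fin c) : ℕ :=
  sInf {k : ℕ | ∃ (x : V) (i : Fin c), monDeg G χ x i = k}

/-- `(G, χ)` has a properly colored cycle: a cycle in which no two consecutive
edges (cyclically, including the final/first pair) have the same color. -/
def HasProperlyColoredCycle {V : Type} {c : ℕ} (G : SimpleGraph V)
    (χ : Sym2 V → Fin c) : Prop :=
  ∃ (v : V) (w : G.Walk v v), w.IsCycle ∧
    ∀ i : Fin w.edges.length,
      χ (w.edges.get i) ≠
        χ (w.edges.get ⟨((i : ℕ) + 1) % w.edges.length, Nat.mod_lt _ i.pos⟩)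

/-!
Take as vertices the words over the `c` colours in which every letter occurs at most `d` times,
join two words when one is a proper prefix of the other, and colour such an edge by the letter of
the longer word that follows the shorter one. Below a word `x` there are `count a x` neighbours of
colour `a`; above it there are at least `d - count a x` more (`x ++ [a]`, `x ++ [a, a]`, ...), and
none at all when every letter already occurs `d` times in `x`. Hence `δ_mon = d`.

In a cycle, let `x` be a vertex of minimal length. The rest of the cycle is a walk that avoids `x`
and never drops below length `|x|`, so it stays among the extensions of `x ++ [a]` for a single
letter `a`: both cycle edges at `x` have colour `a`.
-/

open SimpleGraph Function

theorem minMonDeg_eq {V : Type} {c : ℕ} {G : SimpleGraph V} {χ : Sym2 V → Fin c} {d : ℕ}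
    (hle : ∀ x i, d ≤ monDeg G χ x i) (hex : ∃ x i, monDeg G χ x i = d) : minMonDeg G χ = d :=
  IsLeast.csInf_eq ⟨hex, by rintro _ ⟨x, i, rfl⟩; exact hle x i⟩

section

variable {V W : Type} {c : ℕ} {G : SimpleGraph W} {χ : Sym2 W → Fin c} {f : V → W}

theorem HasProperlyColoredCycle.of_comap (hf : Injective f)
    (h : HasProperlyColoredCycle (G.comap f) (χ ∘ Sym2.map f)) : HasProperlyColoredCycle G χ := by
  obtain ⟨v, w, hw, hpc⟩ := h
  refine ⟨_, w.map (Hom.comap f G), (Walk.isCycle_map_iff_of_injective hf).2 hw, ?_⟩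
  rintro ⟨i, hi⟩
  simp only [Walk.edges_map, List.length_map] at hi
  simp only [List.get_eq_getElem, Walk.edges_map, List.getElem_map, List.length_map]
  exact hpc ⟨i, hi⟩

theorem monDeg_comap (hf : Injective f) (x : V) (i : Fin c) :
    monDeg (G.comap f) (χ ∘ Sym2.map f) x i =
      {y ∈ Set.range f | G.Adj (f x) y ∧ χ s(f x, y) = i}.ncard := by
  rw [monDeg, ← Set.coe_ofPred, Nat.card_coe_set_eq, ← Set.ncard_image_of_injective _ hf]
  congr 1
  ext y
  constructor
  · rintro ⟨x', hx', rfl⟩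
    exact ⟨⟨x', rfl⟩, hx'⟩
  · rintro ⟨⟨x', rfl⟩, hx'⟩
    exact ⟨x', hx', rfl⟩

end

theorem List.IsRotated.apply_getLast_ne_apply_head {α β : Type*} {g : α → β} {l l' : List α}
    (hl : ∀ i : Fin l.length, g (l.get i) ≠ g (l.get ⟨(i + 1) % l.length, Nat.mod_lt _ i.pos⟩))
    (h : l ~r l') (hne : l' ≠ []) : g (l'.getLast hne) ≠ g (l'.head hne) := by
  obtain ⟨m, rfl⟩ := h
  have hpos : 0 < l.length := by simpa [List.length_pos_iff] using hne
  have hsucc : (l.length - 1 + m + 1) % l.length = m % l.length := by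
    rw [show l.length - 1 + m + 1 = m + l.length by omega, Nat.add_mod_right]
  simpa [List.getLast_eq_getElem, List.head_eq_getElem, List.getElem_rotate, hsucc]
    using hl ⟨(l.length - 1 + m) % l.length, Nat.mod_lt _ hpos⟩

namespace List

variable {α : Type*}

def prefixGraph (α : Type*) : SimpleGraph (List α) := SimpleGraph.fromRel (· <+: ·)

theorem exists_append_singleton_prefix {x y : List α} (h : x <+: y) (hne : x ≠ y) :
    ∃ a, x ++ [a] <+: y := by
  obtain ⟨_ | ⟨a, r⟩, rfl⟩ := h
  · exact absurd (append_nil x).symm hne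
  · exact ⟨a, by simp⟩

theorem prefixGraph_adj_of_append_singleton_prefix {x y : List α} {a : α} (h : x ++ [a] <+: y) :
    (prefixGraph α).Adj x y := by
  refine (SimpleGraph.fromRel_adj ..).2 ⟨fun hxy ↦ ?_, .inl ((prefix_append x [a]).trans h)⟩
  have := h.length_le
  simp [hxy] at this

theorem exists_append_singleton_prefix_of_adj {x y : List α} (h : (prefixGraph α).Adj x y)
    (hlen : x.length ≤ y.length) : ∃ a, x ++ [a] <+: y := by
  rcases (SimpleGraph.fromRel_adj ..).1 h with ⟨hne, hxy | hyx⟩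
  · exact exists_append_singleton_prefix hxy hne
  · exact absurd (hyx.eq_of_length (hyx.length_le.antisymm hlen)).symm hne

theorem finite_setOf_append_singleton_prefix (l : List α) (a : α) :
    {p | p ++ [a] <+: l}.Finite :=
  l.inits.finite_toSet.subset fun p hp ↦ (mem_inits _ _).2 ((prefix_append p [a]).trans hp)

theorem append_singleton_prefix_of_adj {x y z : List α} {a : α} (hxy : x ++ [a] <+: y)
    (hyz : (prefixGraph α).Adj y z) (hz : x.length ≤ z.length) (hzx : z ≠ x) :
    x ++ [a] <+: z := by
  rcases ((SimpleGraph.fromRel_adj ..).1 hyz).2 with h | h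
  · exact hxy.trans h
  rcases prefix_or_prefix_of_prefix hxy h with h' | h'
  · exact h'
  rcases prefix_concat_iff.1 h' with rfl | h''
  · exact prefix_refl _
  · exact absurd (h''.eq_of_length (h''.length_le.antisymm hz)) hzx

theorem append_singleton_prefix_of_walk {x u v : List α} {a : α} (p : (prefixGraph α).Walk u v)
    (hu : x ++ [a] <+: u) (hp : ∀ y ∈ p.support, x.length ≤ y.length ∧ y ≠ x) :
    x ++ [a] <+: v := by
  induction p with
  | nil => exact hu
  | cons h p ih =>
    have hv := hp _ (mem_cons_of_mem _ p.start_mem_support)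
    exact ih (append_singleton_prefix_of_adj hu h hv.1 hv.2) fun y hy ↦ hp y (by simp [hy])

variable [Inhabited α]

/-- Only the value on a word and a proper extension of it matters. -/
def prefixColor (x y : List α) : α :=
  if x.length ≤ y.length then y.getD x.length default else x.getD y.length default

theorem prefixColor_comm (x y : List α) : prefixColor x y = prefixColor y x := by
  unfold prefixColor
  split_ifs <;> first | rfl | omega | simp [getD_eq_getElem?_getD, *]

def prefixColoring : Sym2 (List α) → α := Sym2.lift ⟨prefixColor, prefixColor_comm⟩

theorem prefixColoring_eq_of_append_singleton_prefix {x y : List α} {a : α}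
    (h : x ++ [a] <+: y) : prefixColoring s(x, y) = a ∧ prefixColoring s(y, x) = a := by
  obtain ⟨r, rfl⟩ := h
  simp [prefixColoring, prefixColor]

theorem prefixGraph_adj_and_prefixColoring_eq_iff {x y : List α} {a : α} :
    (prefixGraph α).Adj x y ∧ prefixColoring s(x, y) = a ↔ y ++ [a] <+: x ∨ x ++ [a] <+: y := by
  constructor
  · rintro ⟨hadj, rfl⟩
    rcases le_total x.length y.length with hle | hle
    · obtain ⟨b, hb⟩ := exists_append_singleton_prefix_of_adj hadj hle
      exact .inr (by rwa [(prefixColoring_eq_of_append_singleton_prefix hb).1])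
    · obtain ⟨b, hb⟩ := exists_append_singleton_prefix_of_adj hadj.symm hle
      exact .inl (by rwa [(prefixColoring_eq_of_append_singleton_prefix hb).2])
  · rintro (h | h)
    · exact ⟨(prefixGraph_adj_of_append_singleton_prefix h).symm,
        (prefixColoring_eq_of_append_singleton_prefix h).2⟩
    · exact ⟨prefixGraph_adj_of_append_singleton_prefix h,
        (prefixColoring_eq_of_append_singleton_prefix h).1⟩

theorem prefixColoring_penultimate_eq_snd {x : List α}
    {w : (prefixGraph α).Walk x x} (hw : w.IsCycle) (hmin : ∀ y ∈ w.support, x.length ≤ y.length) :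
    prefixColoring s(w.penultimate, x) = prefixColoring s(x, w.snd) := by
  cases w with
  | nil => exact absurd hw SimpleGraph.Walk.not_isCycle_nil
  | @cons _ v _ h p =>
    have hvx : v ≠ x := h.ne.symm
    obtain ⟨y, hxy, q, hq⟩ := p.reverse.exists_eq_cons_of_ne hvx.symm
    have hpen : (Walk.cons h p).penultimate = y := by
      rw [Walk.penultimate_cons_of_not_nil _ _ (Walk.not_nil_of_ne hvx), ← Walk.snd_reverse, hq,
        Walk.snd_cons]
    have hxq : x ∉ q.support := by
      have hpath := ((Walk.cons_isCycle_iff p h).1 hw).1.reverse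
      rw [hq, Walk.cons_isPath_iff] at hpath
      exact hpath.2
    have hq_sub : ∀ z ∈ q.support, x.length ≤ z.length := by
      intro z hz
      have hzp : z ∈ p.reverse.support := hq ▸ mem_cons_of_mem _ hz
      rw [Walk.support_reverse, mem_reverse] at hzp
      exact hmin z (mem_cons_of_mem _ hzp)
    obtain ⟨b, hb⟩ := exists_append_singleton_prefix_of_adj hxy (hq_sub y q.start_mem_support)
    have hv : x ++ [b] <+: v := append_singleton_prefix_of_walk q hb fun z hz ↦
      ⟨hq_sub z hz, ne_of_mem_of_not_mem hz hxq⟩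
    rw [hpen, Walk.snd_cons, (prefixColoring_eq_of_append_singleton_prefix hb).2,
      (prefixColoring_eq_of_append_singleton_prefix hv).1]

end List

open List in
theorem not_hasProperlyColoredCycle_prefixGraph {c : ℕ} [NeZero c] :
    ¬ HasProperlyColoredCycle (prefixGraph (Fin c)) prefixColoring := by
  classical
  rintro ⟨v, w, hw, hpc⟩
  obtain ⟨x, hx, hmin⟩ := w.support.toFinset.exists_min_image length ⟨v, by simp⟩
  rw [mem_toFinset] at hx
  have hw' : (w.rotate x hx).IsCycle := hw.rotate hx
  have hne : (w.rotate x hx).edges ≠ [] := by simpa using hw'.not_nil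
  have hcyclic := (w.rotate_edges x hx).symm.apply_getLast_ne_apply_head hpc hne
  rw [Walk.getLast_edges_eq_mk_penultimate_end, Walk.head_edges_eq_mk_start_snd] at hcyclic
  exact hcyclic <| prefixColoring_penultimate_eq_snd hw' fun y hy ↦
    hmin y (by simpa using (w.mem_support_rotate_iff x hx).1 hy)

namespace List

variable {α : Type*} [DecidableEq α]

theorem ncard_setOf_append_singleton_prefix (l : List α) (a : α) :
    {p | p ++ [a] <+: l}.ncard = l.count a := by
  induction l using reverseRecOn with
  | nil => simp
  | append_singleton l b ih =>
    have hl : l ∉ {p | p ++ [a] <+: l} := fun h ↦ by simpa using h.length_le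
    by_cases hab : b = a
    · subst hab
      have : {p | p ++ [b] <+: l ++ [b]} = insert l {p | p ++ [b] <+: l} := by
        ext p
        simp [prefix_concat_iff]
      rw [this, Set.ncard_insert_of_notMem hl (finite_setOf_append_singleton_prefix l b), ih]
      simp
    · have : {p | p ++ [a] <+: l ++ [b]} = {p | p ++ [a] <+: l} := by
        ext p
        simp [prefix_concat_iff, Ne.symm hab]
      rw [this, ih]
      simp [hab]

def boundedCountWords (α : Type*) [DecidableEq α] (d : ℕ) : Set (List α) :=
  {w | ∀ a, w.count a ≤ d}

variable {d : ℕ}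

theorem extensions_eq_empty_of_forall_count_eq {x : List α} (hx : ∀ b, x.count b = d) (a : α) :
    {y ∈ boundedCountWords α d | x ++ [a] <+: y} = ∅ := by
  refine Set.eq_empty_of_forall_notMem fun y ⟨hy, hxy⟩ ↦ ?_
  have := (hxy.sublist.count_le a).trans (hy a)
  simp [hx a] at this

theorem length_le_of_forall_count_le [Fintype α] {w : List α} (h : ∀ a, w.count a ≤ d) :
    w.length ≤ Fintype.card α * d :=
  calc w.length = ∑ a, w.count a := by
        simpa using (Multiset.sum_count_eq_card (s := Finset.univ) (m := (w : Multiset α))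
          fun a _ ↦ Finset.mem_univ a).symm
    _ ≤ ∑ _a : α, d := Finset.sum_le_sum fun a _ ↦ h a
    _ = Fintype.card α * d := by simp

theorem finite_boundedCountWords (α : Type*) [DecidableEq α] [Fintype α] (d : ℕ) :
    (boundedCountWords α d).Finite :=
  (finite_length_le α _).subset fun _ hw ↦ length_le_of_forall_count_le hw

theorem exists_forall_count_eq (α : Type*) [DecidableEq α] [Fintype α] (d : ℕ) :
    ∃ w : List α, ∀ a, w.count a = d :=
  ⟨(d • (Finset.univ : Finset α).val).toList, fun a ↦ by
    rw [← Multiset.coe_count, Multiset.coe_toList, Multiset.count_nsmul, Multiset.count_univ,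
      mul_one]⟩

variable [Fintype α]

theorem ncard_colored_neighbors_boundedCountWords [Inhabited α] {x : List α}
    (hx : x ∈ boundedCountWords α d) (a : α) :
    {y ∈ boundedCountWords α d | (prefixGraph α).Adj x y ∧ prefixColoring s(x, y) = a}.ncard =
      x.count a + {y ∈ boundedCountWords α d | x ++ [a] <+: y}.ncard := by
  have hsplit : {y ∈ boundedCountWords α d | (prefixGraph α).Adj x y ∧ prefixColoring s(x, y) = a}
      = {y | y ++ [a] <+: x} ∪ {y ∈ boundedCountWords α d | x ++ [a] <+: y} := by
    ext y
    simp only [prefixGraph_adj_and_prefixColoring_eq_iff, Set.mem_ofPred_eq, Set.mem_union]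
    constructor
    · rintro ⟨hy, h | h⟩
      exacts [.inl h, .inr ⟨hy, h⟩]
    · rintro (h | ⟨hy, h⟩)
      · exact ⟨fun b ↦ (((prefix_append y [a]).trans h).sublist.count_le b).trans (hx b), .inl h⟩
      · exact ⟨hy, .inr h⟩
  have hdisj :
      _root_.Disjoint {y | y ++ [a] <+: x} {y ∈ boundedCountWords α d | x ++ [a] <+: y} := by
    refine Set.disjoint_left.2 fun y h₁ h₂ ↦ ?_
    have h₁ := h₁.length_le
    have h₂ := h₂.2.length_le
    simp only [length_append, length_singleton] at h₁ h₂
    omega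
  rw [hsplit, Set.ncard_union_eq hdisj (finite_setOf_append_singleton_prefix x a)
    ((finite_boundedCountWords α d).subset fun _ hy ↦ hy.1), ncard_setOf_append_singleton_prefix]

theorem le_count_add_ncard_extensions {x : List α} (hx : x ∈ boundedCountWords α d) (a : α) :
    d ≤ x.count a + {y ∈ boundedCountWords α d | x ++ [a] <+: y}.ncard := by
  set k := d - x.count a
  let extend (m : ℕ) : List α := x ++ replicate (m + 1) a
  have hsub :
      ↑((Finset.range k).image extend) ⊆ {y ∈ boundedCountWords α d | x ++ [a] <+: y} := by
    intro y hy
    simp only [Finset.coe_image, Finset.coe_range, Set.mem_image, Set.mem_Iio] at hy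
    obtain ⟨m, hm, rfl⟩ := hy
    refine ⟨fun b ↦ ?_, by simp [extend, replicate_succ]⟩
    rw [count_append, count_replicate]
    split_ifs with hab
    · obtain rfl : a = b := by simpa using hab
      omega
    · simpa using hx b
  have hinj : Function.Injective extend := fun m n h ↦ by simpa [extend] using h
  have hk : k ≤ {y ∈ boundedCountWords α d | x ++ [a] <+: y}.ncard := by
    calc k = ((Finset.range k).image extend).card := by
          rw [Finset.card_image_of_injective _ hinj, Finset.card_range]
      _ ≤ _ := by
        rw [← Set.ncard_coe_finset]
        exact Set.ncard_le_ncard hsub ((finite_boundedCountWords α d).subset fun _ hy ↦ hy.1)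
  omega

end List

open List in
theorem exists_no_properly_colored_cycle_general (c d : ℕ) (hc : 2 ≤ c) :
    ∃ (V : Type) (_ : Fintype V) (G : SimpleGraph V) (χ : Sym2 V → Fin c),
      minMonDeg G χ = d ∧ ¬ HasProperlyColoredCycle G χ := by
  have : NeZero c := ⟨by omega⟩
  let S := boundedCountWords (Fin c) d
  have hdeg (x : S) (a : Fin c) :
      monDeg ((prefixGraph (Fin c)).comap Subtype.val) (prefixColoring ∘ Sym2.map Subtype.val) x a
        = x.1.count a + {y ∈ S | x.1 ++ [a] <+: y}.ncard := by
    rw [monDeg_comap Subtype.val_injective, Subtype.range_coe,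
      ncard_colored_neighbors_boundedCountWords x.2]
  obtain ⟨z, hz⟩ := exists_forall_count_eq (Fin c) d
  refine ⟨S, (finite_boundedCountWords (Fin c) d).fintype, _, _, minMonDeg_eq
    (fun x a ↦ hdeg x a ▸ le_count_add_ncard_extensions x.2 a) ⟨⟨z, (hz · |>.le)⟩, default, ?_⟩,
    fun h ↦ not_hasProperlyColoredCycle_prefixGraph (h.of_comap Subtype.val_injective)⟩
  rw [hdeg, extensions_eq_empty_of_forall_count_eq hz, Set.ncard_empty, hz, add_zero]

/-- For every `c ≥ 2` and `d ≥ 1` there is a `c`-edge-colored graph `G` with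
`δ_mon(G) = d` and with no properly colored cycle. -/
theorem exists_no_properly_colored_cycle (c d : ℕ) (hc : 2 ≤ c) (hd : 1 ≤ d) :
    ∃ (V : Type) (_ : Fintype V) (G : SimpleGraph V) (χ : Sym2 V → Fin c),
      minMonDeg G χ = d ∧ ¬ HasProperlyColoredCycle G χ :=
  exists_no_properly_colored_cycle_general c d hc
end

section
/- For every integer c ≥ 2, every integer d ≥ 1, and every natural number N, there exists a c-edge-colored graph G on more than N vertices with δ_mon(G) = d that has no properly colored cycle; in particular, for each d ≥ 1 there are infinitely many (up to order) c-edge-colored graphs with minimum monochromatic degree d and no properly colored cycle. -/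
/-!
Join every repetition-free word over `Fin c × Fin d` to all its proper prefixes and extensions,
and color the edge between a word `u` and a proper extension `v` by the first coordinate of the
letter of `v` following `u`. On a cycle take a shortest word `u`: every other word of the cycle
properly extends `u`, and consecutive ones are comparable, so they all carry the same letter right
after `u`; hence the two cycle edges at `u` have the same color. For each color `i`, a word has the
`d` neighbors obtained by cutting it before, or extending it by, a letter `(i, r)`; a word using
every letter has no other neighbors. Taking `N + 1` disjoint copies makes the graph large.
-/

open SimpleGraph

namespace SimpleGraph.Walk

variable {V : Type*} {G : SimpleGraph V} {v : V}

lemma getVert_mod_length_add_one (w : G.Walk v v) (s : ℕ) :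
    w.getVert (s % w.length + 1) = w.getVert ((s + 1) % w.length) := by
  rcases Nat.eq_zero_or_pos w.length with h0 | hpos
  · simp [h0]
  rw [← Nat.mod_add_mod]
  by_cases h : s % w.length + 1 < w.length
  · rw [Nat.mod_eq_of_lt h]
  · have hlast : s % w.length + 1 = w.length := by have := Nat.mod_lt s hpos; omega
    rw [hlast, Nat.mod_self, getVert_length, getVert_zero]

lemma IsCycle.mod_length_eq_of_getVert_eq {w : G.Walk v v} (hw : w.IsCycle) {i j : ℕ}
    (h : w.getVert (i % w.length) = w.getVert (j % w.length)) :
    i % w.length = j % w.length := by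
  have hpos : 0 < w.length := by have := hw.three_le_length; omega
  exact hw.getVert_injOn' (Nat.le_sub_one_of_lt (Nat.mod_lt i hpos))
    (Nat.le_sub_one_of_lt (Nat.mod_lt j hpos)) h

end SimpleGraph.Walk

/-- A properly colored cycle of length `n`, its vertices listed as an `n`-periodic sequence. -/
structure IsProperlyColoredCyclicSeq {V C : Type*} (G : SimpleGraph V) (χ : Sym2 V → C)
    (n : ℕ) (P : ℕ → V) : Prop where
  pos : 0 < n
  periodic : Function.Periodic P n
  adj : ∀ s, G.Adj (P s) (P (s + 1))
  ne_of_lt : ∀ s k, 0 < k → k < n → P (s + k) ≠ P s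
  color_ne : ∀ s, χ s(P s, P (s + 1)) ≠ χ s(P (s + 1), P (s + 2))

namespace IsProperlyColoredCyclicSeq

variable {V C : Type*} {G : SimpleGraph V} {χ : Sym2 V → C} {n : ℕ} {P : ℕ → V}

lemma comp_add (hP : IsProperlyColoredCyclicSeq G χ n P) (t : ℕ) :
    IsProperlyColoredCyclicSeq G χ n (fun s => P (t + s)) where
  pos := hP.pos
  periodic := hP.periodic.const_add t
  adj s := by simpa only [add_assoc] using hP.adj (t + s)
  ne_of_lt s k := by simpa only [add_assoc] using hP.ne_of_lt (t + s) k
  color_ne s := by simpa only [add_assoc] using hP.color_ne (t + s)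

lemma exists_forall_le (hP : IsProperlyColoredCyclicSeq G χ n P) (f : V → ℕ) :
    ∃ Q, IsProperlyColoredCyclicSeq G χ n Q ∧ ∀ k, f (Q 0) ≤ f (Q k) :=
  ⟨_, hP.comp_add (Function.argmin (f ∘ P)), fun k => by
    simpa using Function.argmin_le (f ∘ P) (Function.argmin (f ∘ P) + k)⟩

end IsProperlyColoredCyclicSeq

theorem HasProperlyColoredCycle.exists_isProperlyColoredCyclicSeq {V : Type} {c : ℕ}
    {G : SimpleGraph V} {χ : Sym2 V → Fin c} (h : HasProperlyColoredCycle G χ) :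
    ∃ n P, IsProperlyColoredCyclicSeq G χ n P := by
  obtain ⟨v, w, hw, hχ⟩ := h
  have hpos : 0 < w.length := by have := hw.three_le_length; omega
  refine ⟨w.length, fun s => w.getVert (s % w.length), hpos, fun s => by simp, fun s => ?_,
    fun s k hk hkn heq => ?_, fun s => ?_⟩
  · rw [← w.getVert_mod_length_add_one]
    exact w.adj_getVert_succ (Nat.mod_lt s hpos)
  · have hmod : s + k ≡ s + 0 [MOD w.length] := hw.mod_length_eq_of_getVert_eq heq
    have hdvd : w.length ∣ k := (Nat.modEq_zero_iff_dvd).1 (hmod.add_left_cancel' s)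
    exact absurd (Nat.le_of_dvd hk hdvd) (by omega)
  · simpa [Walk.getElem_edges, Nat.mod_add_mod, Walk.getVert_mod_length_add_one]
      using hχ ⟨s % w.length, by simpa using Nat.mod_lt s hpos⟩

namespace List

variable {α : Type*}

lemma getElem?_eq_of_prefix_or_prefix {l l' : List α} (h : l <+: l' ∨ l' <+: l) {i : ℕ}
    (hi : i < l.length) (hi' : i < l'.length) : l[i]? = l'[i]? := by
  rcases h with h | h
  · simp [hi, hi', h.getElem hi]
  · simp [hi, hi', h.getElem hi']

lemma getElem?_eq_of_chain {p : ℕ → List α}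
    (hcomp : ∀ k, p k <+: p (k + 1) ∨ p (k + 1) <+: p k) {i n : ℕ} (hlen : ∀ k, 1 ≤ k → k < n → i < (p k).length) :
    ∀ k, 1 ≤ k → k < n → (p k)[i]? = (p 1)[i]? := by
  intro k hk
  induction k, hk using Nat.le_induction with
  | base => exact fun _ => rfl
  | succ k hk ih =>
    intro hkn
    rw [← ih (by omega), getElem?_eq_of_prefix_or_prefix (hcomp k) (hlen k hk (by omega))
      (hlen (k + 1) (by omega) hkn)]

end List

/-- For comparable words, the letter at which the longer one leaves the shorter. -/
def edgeLetter {α : Type*} (l l' : List α) : Option α :=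
  if l.length ≤ l'.length then l'[l.length]? else l[l'.length]?

section edgeLetter

variable {α : Type*} {l l' : List α}

lemma edgeLetter_of_length_le (h : l.length ≤ l'.length) : edgeLetter l l' = l'[l.length]? :=
  if_pos h

lemma edgeLetter_comm (l l' : List α) : edgeLetter l l' = edgeLetter l' l := by
  unfold edgeLetter
  split_ifs with h h' h'
  · simp [le_antisymm h h']
  · rfl
  · rfl
  · omega

end edgeLetter

def prefixGraph (ι α : Type*) : SimpleGraph (ι × {l : List α // l.Nodup}) where
  Adj x y := x.1 = y.1 ∧ x.2.1 ≠ y.2.1 ∧ (x.2.1 <+: y.2.1 ∨ y.2.1 <+: x.2.1)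
  symm := ⟨fun _ _ ⟨h₁, h₂, h₃⟩ => ⟨h₁.symm, h₂.symm, h₃.symm⟩⟩
  loopless := ⟨fun _ h => h.2.1 rfl⟩

/-- The default color `c₀` is only used on non-edges. -/
def prefixColoring {ι α C : Type*} (κ : α → C) (c₀ : C) :
    Sym2 (ι × {l : List α // l.Nodup}) → C :=
  Sym2.lift ⟨fun x y => (edgeLetter x.2.1 y.2.1).elim c₀ κ, fun x y => by
    dsimp only
    rw [edgeLetter_comm]⟩

section prefixGraph

variable {ι α C : Type*}

lemma prefixColoring_mk (κ : α → C) (c₀ : C) (x y : ι × {l : List α // l.Nodup}) :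
    prefixColoring κ c₀ s(x, y) = (edgeLetter x.2.1 y.2.1).elim c₀ κ :=
  rfl

lemma prefixGraph.fst_eq_and_prefix_of_chain {Q : ℕ → ι × {l : List α // l.Nodup}}
    (hadj : ∀ s, (prefixGraph ι α).Adj (Q s) (Q (s + 1)))
    (hmin : ∀ k, (Q 0).2.1.length ≤ (Q k).2.1.length) (k : ℕ) :
    (Q k).1 = (Q 0).1 ∧ (Q 0).2.1 <+: (Q k).2.1 := by
  induction k with
  | zero => exact ⟨rfl, List.prefix_refl _⟩
  | succ k ih =>
    obtain ⟨hfst, -, hcomp⟩ := hadj k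
    refine ⟨hfst.symm.trans ih.1, ?_⟩
    rcases hcomp with h | h
    · exact ih.2.trans h
    · exact List.prefix_of_prefix_length_le ih.2 h (hmin _)

theorem not_isProperlyColoredCyclicSeq_prefixGraph (κ : α → C) (c₀ : C) (n : ℕ)
    (P : ℕ → ι × {l : List α // l.Nodup}) :
    ¬ IsProperlyColoredCyclicSeq (prefixGraph ι α) (prefixColoring κ c₀) n P := by
  intro hP
  obtain ⟨Q, hQ, hmin⟩ := hP.exists_forall_le fun x => x.2.1.length
  set m := Q 0
  have hchain := prefixGraph.fst_eq_and_prefix_of_chain hQ.adj hmin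
  have hlong : ∀ k, 1 ≤ k → k < n → m.2.1.length < (Q k).2.1.length := by
    intro k hk hkn
    refine lt_of_le_of_ne (hmin k) fun hlen => hQ.ne_of_lt 0 k hk hkn ?_
    rw [zero_add]
    exact Prod.ext (hchain k).1 (Subtype.ext ((hchain k).2.eq_of_length hlen).symm)
  have hQn : Q n = m := by simpa using hQ.periodic 0
  have hn : 1 < n := by
    by_contra h
    obtain rfl : n = 1 := by have := hQ.pos; omega
    exact (hQ.adj 0).ne hQn.symm
  have hletter := List.getElem?_eq_of_chain (fun k => (hQ.adj k).2.2) hlong (n - 1) (by omega)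
    (by omega)
  apply hQ.color_ne (n - 1)
  rw [Nat.sub_add_cancel hQ.pos, hQn, show n - 1 + 2 = 1 + n by omega, hQ.periodic 1,
    Sym2.eq_swap, prefixColoring_mk, prefixColoring_mk,
    edgeLetter_of_length_le (hmin _), edgeLetter_of_length_le (hmin _), hletter]

theorem not_hasProperlyColoredCycle_prefixGraph_s1 {ι α : Type} {c : ℕ} (κ : α → Fin c)
    (c₀ : Fin c) : ¬ HasProperlyColoredCycle (prefixGraph ι α) (prefixColoring κ c₀) :=
  fun h =>
    let ⟨n, P, hP⟩ := h.exists_isProperlyColoredCyclicSeq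
    not_isProperlyColoredCyclicSeq_prefixGraph κ c₀ n P hP

end prefixGraph

def neighborVia {α : Type*} [DecidableEq α] (l : List α) (a : α) : List α :=
  if a ∈ l then l.take (l.idxOf a) else l ++ [a]

section neighborVia

variable {α : Type*} [DecidableEq α] {l : List α} {a : α}

lemma nodup_neighborVia (hl : l.Nodup) : (neighborVia l a).Nodup := by
  unfold neighborVia
  split_ifs with h
  · exact hl.sublist (List.take_sublist _ _)
  · simpa [List.nodup_append, hl] using fun b hb (hba : b = a) => h (hba ▸ hb)

lemma neighborVia_ne : neighborVia l a ≠ l := by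
  unfold neighborVia
  split_ifs with h
  · intro heq
    have hlen := congrArg List.length heq
    rw [List.length_take, min_eq_left (List.idxOf_lt_length_iff.2 h).le] at hlen
    exact (List.idxOf_lt_length_iff.2 h).ne hlen
  · exact fun heq => by simpa using congrArg List.length heq

lemma prefix_or_prefix_neighborVia : l <+: neighborVia l a ∨ neighborVia l a <+: l := by
  unfold neighborVia
  split_ifs
  · exact Or.inr (List.take_prefix _ _)
  · exact Or.inl (List.prefix_append _ _)

lemma edgeLetter_neighborVia : edgeLetter l (neighborVia l a) = some a := by
  unfold neighborVia
  split_ifs with h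
  · have hidx := List.idxOf_lt_length_iff.2 h
    rw [edgeLetter_comm, edgeLetter_of_length_le (by simp), List.length_take,
      min_eq_left hidx.le, List.getElem?_eq_getElem hidx, List.getElem_idxOf]
  · simp [edgeLetter_of_length_le]

end neighborVia

lemma minMonDeg_eq_of_forall_le {V : Type} {c d : ℕ} {G : SimpleGraph V} {χ : Sym2 V → Fin c}
    (hle : ∀ x i, d ≤ monDeg G χ x i) (x : V) (i : Fin c) (hx : monDeg G χ x i = d) :
    minMonDeg G χ = d :=
  le_antisymm (Nat.sInf_le ⟨x, i, hx⟩)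
    (le_csInf ⟨d, x, i, hx⟩ fun _ ⟨y, j, hy⟩ => hy ▸ hle y j)

section monDeg

variable {ι α : Type} [Finite ι] [Fintype α] {c : ℕ} (κ : α → Fin c) (c₀ : Fin c)

theorem card_fiber_le_monDeg_prefixGraph (x : ι × {l : List α // l.Nodup}) (i : Fin c) :
    Nat.card {a // κ a = i} ≤ monDeg (prefixGraph ι α) (prefixColoring κ c₀) x i := by
  classical
  refine Nat.card_le_card_of_injective
    (fun a => ⟨(x.1, ⟨neighborVia x.2.1 a.1, nodup_neighborVia x.2.2⟩),
      ⟨rfl, neighborVia_ne.symm, prefix_or_prefix_neighborVia⟩,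
      by simp [prefixColoring_mk, edgeLetter_neighborVia, a.2]⟩) fun a b hab => ?_
  have := congrArg (fun y => edgeLetter x.2.1 y.1.2.1) hab
  simpa [edgeLetter_neighborVia, Subtype.ext_iff] using this

theorem monDeg_prefixGraph_of_forall_mem (j : ι) {f : List α} (hf : f.Nodup)
    (hmem : ∀ a, a ∈ f) (i : Fin c) :
    monDeg (prefixGraph ι α) (prefixColoring κ c₀) (j, ⟨f, hf⟩) i =
      Nat.card {a // κ a = i} := by
  refine le_antisymm ?_ (card_fiber_le_monDeg_prefixGraph κ c₀ _ i)
  -- A word using every letter has no proper extension.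
  have hnbr : ∀ y, (prefixGraph ι α).Adj (j, ⟨f, hf⟩) y →
      y.1 = j ∧ y.2.1 <+: f ∧ y.2.1.length < f.length := by
    rintro y ⟨hfst, hne, hcomp⟩
    have hle : y.2.1.length ≤ f.length :=
      (List.subperm_of_subset y.2.2 fun a _ => hmem a).length_le
    have hpre : y.2.1 <+: f :=
      hcomp.elim (fun h => h.eq_of_length (le_antisymm h.length_le hle) ▸ h) id
    exact ⟨hfst.symm, hpre, lt_of_le_of_ne hle fun h => hne (hpre.eq_of_length h).symm⟩
  refine Nat.card_le_card_of_injective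
    (fun y => ⟨f[y.1.2.1.length]'(hnbr _ y.2.1).2.2, ?_⟩) fun y y' h => ?_
  · have := y.2.2
    rwa [prefixColoring_mk, edgeLetter_comm, edgeLetter_of_length_le (hnbr _ y.2.1).2.2.le,
      List.getElem?_eq_getElem (hnbr _ y.2.1).2.2] at this
  · obtain ⟨hfst, hpre, -⟩ := hnbr _ y.2.1
    obtain ⟨hfst', hpre', -⟩ := hnbr _ y'.2.1
    have hlen := (hf.getElem_inj_iff).1 (congrArg Subtype.val h)
    exact Subtype.ext (Prod.ext (hfst.trans hfst'.symm) (Subtype.ext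
      ((List.prefix_of_prefix_length_le hpre hpre' hlen.le).eq_of_length hlen)))

theorem minMonDeg_prefixGraph [Nonempty ι] {d : ℕ} (hκ : ∀ i, Nat.card {a // κ a = i} = d) :
    minMonDeg (prefixGraph ι α) (prefixColoring κ c₀) = d :=
  minMonDeg_eq_of_forall_le (fun x i => hκ i ▸ card_fiber_le_monDeg_prefixGraph κ c₀ x i)
    (Classical.arbitrary ι, ⟨_, Finset.univ.nodup_toList⟩) c₀
    ((monDeg_prefixGraph_of_forall_mem κ c₀ _ _ (by simp) c₀).trans (hκ c₀))

end monDeg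

theorem exists_no_properly_colored_cycle_large_order_general
    (c d N : ℕ) (hc : 2 ≤ c) :
    ∃ (V : Type) (_ : Fintype V) (G : SimpleGraph V) (χ : Sym2 V → Fin c),
      N < Nat.card V ∧ minMonDeg G χ = d ∧ ¬ HasProperlyColoredCycle G χ := by
  let c₀ : Fin c := ⟨0, by omega⟩
  refine ⟨Fin (N + 1) × {l : List (Fin c × Fin d) // l.Nodup}, inferInstance, prefixGraph _ _,
    prefixColoring Prod.fst c₀, ?_, minMonDeg_prefixGraph Prod.fst c₀ fun i => ?_,
    not_hasProperlyColoredCycle_prefixGraph_s1 Prod.fst c₀⟩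
  · have : 0 < Nat.card {l : List (Fin c × Fin d) // l.Nodup} :=
      have : Nonempty {l : List (Fin c × Fin d) // l.Nodup} := ⟨⟨[], List.nodup_nil⟩⟩
      Nat.card_pos
    rw [Nat.card_prod, Nat.card_fin]
    exact Nat.lt_of_lt_of_le N.lt_succ_self (Nat.le_mul_of_pos_right _ this)
  · rw [Nat.card_congr (Equiv.prodSubtypeFstEquivSubtypeProd (p := (· = i))), Nat.card_prod]
    simp

/-- For every `c ≥ 2`, `d ≥ 1` and every `N`, there is a `c`-edge-colored graph
on more than `N` vertices with `δ_mon(G) = d` and no properly colored cycle;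
hence there are infinitely many such graphs (up to order). -/
theorem exists_no_properly_colored_cycle_large_order
    (c d N : ℕ) (hc : 2 ≤ c) (hd : 1 ≤ d) :
    ∃ (V : Type) (_ : Fintype V) (G : SimpleGraph V) (χ : Sym2 V → Fin c),
      N < Nat.card V ∧ minMonDeg G χ = d ∧ ¬ HasProperlyColoredCycle G χ :=
  exists_no_properly_colored_cycle_large_order_general c d N hc
end

section
/- For every integer c ≥ 2 and every integer n ≥ c, there exists a c-edge-colored graph G on exactly n vertices with no properly colored cycle such that δ_mon(G) + 1 ≥ (1/c)·(log_c n − log_c (log_c n)), where logarithms are to base c. In particular, the function d(n,c) — the minimum k such that every c-edge-colored graph of order n with minimum monochromatic degree at least k has a properly colored cycle — satisfies d(n,c) ≥ (1/c)(log_c n − log_c log_c n). -/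
/-- `d(n,c)`: the minimum `k` such that every `c`-edge-colored graph of order
`n` with minimum monochromatic degree at least `k` has a properly colored
cycle. -/
noncomputable def dFun (n c : ℕ) : ℕ :=
  sInf {k : ℕ | ∀ (V : Type) (_ : Fintype V) (G : SimpleGraph V) (χ : Sym2 V → Fin c),
    Nat.card V = n → k ≤ minMonDeg G χ → HasProperlyColoredCycle G χ}

/-!
Words over `Fin c` in which every letter occurs at most `k` times are ordered by the prefix
relation; join each word to all its proper extensions and colour the edge from `u` to a longer
word `v` by the letter `v[|u|]`. On a cycle, pick a vertex `u` of minimal length: every other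
vertex of the cycle properly extends `u` and adjacent ones agree at position `|u|`, so the two
cycle edges at `u` get the same colour. On the other hand, for every letter `a` and every
`j ≤ k` other than the number of `a`'s in a word `w`, a prefix of `w` or an extension of `w` by
`a`'s is an `a`-coloured neighbour of `w` containing exactly `j` letters `a`; hence `δ_mon ≥ k`.

The word containing every letter exactly `k` times has no proper extension, so it may be
replaced by any number of copies; this realises every order `n` once `k` is the largest value
with at most `n` bounded words. Then `n` is less than `c ^ (c (k + 1) + 1)`, which bounds the
number of words of length at most `c (k + 1)`, and this rearranges to the claimed bound. Any
coloured graph of order `n` without properly coloured cycles bounds `d(n, c)` from below by its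
`δ_mon + 1`.
-/

lemma List.IsPrefix.getD_eq {α : Type*} {l₁ l₂ : List α} (h : l₁ <+: l₂) {n : ℕ}
    (hn : n < l₁.length) (d : α) : l₁.getD n d = l₂.getD n d := by
  rw [List.getD_eq_getElem _ _ hn, List.getD_eq_getElem _ _ (hn.trans_le h.length_le),
    h.getElem hn]

lemma List.exists_eq_append_cons_count_eq {α : Type*} [DecidableEq α] {l : List α} {a : α}
    {j : ℕ} (hj : j < l.count a) : ∃ p s, l = p ++ a :: s ∧ p.count a = j := by
  induction l generalizing j with
  | nil => simp at hj
  | cons b t ih =>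
    by_cases hba : b = a
    · subst hba
      rcases j with _ | j
      · exact ⟨[], t, rfl, rfl⟩
      · obtain ⟨p, s, rfl, hp⟩ := ih (j := j) (by simpa using hj)
        exact ⟨b :: p, s, rfl, by simpa using hp⟩
    · obtain ⟨p, s, rfl, hp⟩ := ih (j := j) (by simpa [List.count_cons, hba] using hj)
      exact ⟨b :: p, s, rfl, by simpa [List.count_cons, hba] using hp⟩

lemma List.ncard_setOf_length_le_lt {α : Type*} [Fintype α] (hα : 2 ≤ Fintype.card α)
    (L : ℕ) : {l : List α | l.length ≤ L}.ncard < Fintype.card α ^ (L + 1) := by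
  have hle : ∀ L, {l : List α | l.length ≤ L}.ncard ≤
      ∑ j ∈ Finset.range (L + 1), Fintype.card α ^ j := by
    intro L
    induction L with
    | zero => simp
    | succ L ih =>
      have hunion : {l : List α | l.length ≤ L + 1} =
          {l | l.length ≤ L} ∪ {l | l.length = L + 1} := by
        ext l; simp only [Set.mem_ofPred_eq, Set.mem_union]; omega
      have hcard : {l : List α | l.length = L + 1}.ncard = Fintype.card α ^ (L + 1) := by
        rw [← Nat.card_coe_set_eq, ← card_vector, ← Nat.card_eq_fintype_card]
        rfl
      rw [hunion, Finset.sum_range_succ, ← hcard]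
      exact (Set.ncard_union_le _ _).trans (by omega)
  exact (hle L).trans_lt (Nat.geomSum_lt hα fun j hj => Finset.mem_range.mp hj)

lemma Nat.exists_le_and_lt_succ {N : ℕ → ℕ} {n : ℕ} (h0 : N 0 ≤ n) (hN : ∃ k, n < N k) :
    ∃ k, N k ≤ n ∧ n < N (k + 1) := by
  classical
  obtain ⟨k, hk⟩ : ∃ k, Nat.find hN = k + 1 :=
    Nat.exists_eq_succ_of_ne_zero fun h => (h ▸ Nat.find_spec hN).not_ge h0
  exact ⟨k, not_lt.mp (Nat.find_min hN (by omega)), hk ▸ Nat.find_spec hN⟩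

lemma Real.logb_sub_logb_logb_le {b x : ℝ} {e : ℕ} (hb : 1 < b) (hbx : b ≤ x) (hbe : b ≤ e)
    (hx : x < b ^ (e + 1)) : logb b x - logb b (logb b x) ≤ e := by
  have hx0 : 0 < x := by linarith
  have h1 : 1 ≤ logb b x := by
    rw [← logb_self_eq_one hb]; exact logb_le_logb_of_le hb (by linarith) hbx
  have h2 : logb b x < e + 1 := by
    rw [logb_lt_iff_lt_rpow hb hx0]; exact_mod_cast hx
  rcases le_or_gt (logb b x) e with h | h
  · linarith [logb_nonneg hb h1]
  · have : 1 ≤ logb b (logb b x) := by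
      rw [← logb_self_eq_one hb]; exact logb_le_logb_of_le hb (by linarith) (by linarith)
    linarith

section MonochromaticDegree

variable {V : Type} {c : ℕ} {G : SimpleGraph V} {χ : Sym2 V → Fin c}

lemma le_minMonDeg [Nonempty V] [NeZero c] {k : ℕ} (h : ∀ x i, k ≤ monDeg G χ x i) :
    k ≤ minMonDeg G χ :=
  le_csInf ⟨_, Classical.arbitrary V, 0, rfl⟩ (by rintro _ ⟨x, i, rfl⟩; exact h x i)

lemma monDeg_lt_card [Finite V] (x : V) (i : Fin c) : monDeg G χ x i < Nat.card V :=
  Finite.card_subtype_lt fun h => G.loopless.irrefl x h.1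

lemma minMonDeg_lt_card [Finite V] [Nonempty V] [NeZero c] : minMonDeg G χ < Nat.card V := by
  have hle : minMonDeg G χ ≤ monDeg G χ (Classical.arbitrary V) 0 := Nat.sInf_le ⟨_, 0, rfl⟩
  exact hle.trans_lt (monDeg_lt_card _ _)

lemma minMonDeg_lt_dFun [Finite V] [Nonempty V] [NeZero c]
    (hG : ¬ HasProperlyColoredCycle G χ) : minMonDeg G χ < dFun (Nat.card V) c := by
  refine le_csInf ⟨Nat.card V, ?_⟩ fun b hb => ?_
  · intro W _ H ψ hW hle
    have : Nonempty W := (Nat.card_pos_iff.mp (hW ▸ Nat.card_pos)).1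
    exact absurd hle (not_le.mpr (hW ▸ minMonDeg_lt_card))
  · by_contra! hlt
    exact hG (hb V (Fintype.ofFinite V) G χ rfl (Nat.le_of_lt_succ hlt))

end MonochromaticDegree

def IsCyclicallyProper {V : Type} {c : ℕ} (χ : Sym2 V → Fin c) (l : List (Sym2 V)) : Prop :=
  ∀ i : Fin l.length,
    χ (l.get i) ≠ χ (l.get ⟨((i : ℕ) + 1) % l.length, Nat.mod_lt _ i.pos⟩)

lemma IsCyclicallyProper.rotate {V : Type} {c : ℕ} {χ : Sym2 V → Fin c} {l : List (Sym2 V)}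
    (h : IsCyclicallyProper χ l) (n : ℕ) : IsCyclicallyProper χ (l.rotate n) := by
  intro i
  have hpos : 0 < l.length := l.length_rotate n ▸ i.pos
  have key := h ⟨((i : ℕ) + n) % l.length, Nat.mod_lt _ hpos⟩
  simp only [List.get_eq_getElem, List.getElem_rotate, List.length_rotate, Nat.mod_add_mod,
    Nat.add_right_comm _ 1 n] at key ⊢
  exact key

namespace PrefixGraph

variable {α : Type*}

def prefixGraph (α : Type*) : SimpleGraph (List α) where
  Adj u v := u ≠ v ∧ (u <+: v ∨ v <+: u)
  symm := ⟨fun _ _ h => ⟨h.1.symm, h.2.symm⟩⟩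
  loopless := ⟨fun _ h => h.1 rfl⟩

/-- For comparable words: the letter of the longer one at the length of the shorter one. -/
def branchLetter [Inhabited α] (u v : List α) : α :=
  u.getD v.length (v.getD u.length default)

lemma branchLetter_of_length_lt [Inhabited α] {u v : List α} (h : u.length < v.length) :
    branchLetter u v = v.getD u.length default :=
  List.getD_eq_default _ _ h.le

lemma branchLetter_comm [Inhabited α] (u v : List α) : branchLetter u v = branchLetter v u := by
  rcases lt_trichotomy u.length v.length with h | h | h
  · rw [branchLetter_of_length_lt h, branchLetter, List.getD_eq_getElem _ _ h,
      List.getD_eq_getElem _ _ h]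
  · simp [branchLetter, h]
  · rw [branchLetter_of_length_lt h, branchLetter, List.getD_eq_getElem _ _ h,
      List.getD_eq_getElem _ _ h]

lemma branchLetter_append_cons [Inhabited α] (u s : List α) (a : α) :
    branchLetter u (u ++ a :: s) = a := by
  rw [branchLetter_of_length_lt (by simp)]
  simp

def branchColoring [Inhabited α] : Sym2 (List α) → α :=
  Sym2.lift ⟨branchLetter, branchLetter_comm⟩

lemma prefix_of_adj {w u v : List α} (hadj : (prefixGraph α).Adj u v) (hu : w <+: u)
    (hv : w.length ≤ v.length) : w <+: v := by
  rcases hadj.2 with h | h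
  · exact hu.trans h
  · exact List.prefix_of_prefix_length_le hu h hv

lemma getD_eq_of_adj {u v : List α} (hadj : (prefixGraph α).Adj u v) {n : ℕ}
    (hu : n < u.length) (hv : n < v.length) (d : α) : u.getD n d = v.getD n d := by
  rcases hadj.2 with h | h
  · exact h.getD_eq hu d
  · exact (h.getD_eq hv d).symm

section Comap

variable {V : Type}

lemma prefix_getVert {f : V → List α} {u v : V} (p : ((prefixGraph α).comap f).Walk u v)
    (hmin : ∀ z ∈ p.support, (f u).length ≤ (f z).length) (i : ℕ) :
    f u <+: f (p.getVert i) := by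
  induction i with
  | zero => rw [p.getVert_zero]
  | succ i ih =>
    rcases lt_or_ge i p.length with hi | hi
    · exact prefix_of_adj (p.adj_getVert_succ hi) ih (hmin _ (p.getVert_mem_support _))
    · rwa [p.getVert_of_length_le (by omega), ← p.getVert_of_length_le hi]

variable {c : ℕ} [NeZero c] {f : V → List (Fin c)}

def prefixColoring (f : V → List (Fin c)) : Sym2 V → Fin c :=
  fun e => branchColoring (e.map f)

lemma prefixColoring_mk (x y : V) : prefixColoring f s(x, y) = branchLetter (f x) (f y) := rfl

lemma branchLetter_snd_eq_penultimate {u : V} {p : ((prefixGraph _).comap f).Walk u u}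
    (hp : p.IsCycle) (hmin : ∀ z ∈ p.support, (f u).length ≤ (f z).length)
    (hf : ∀ x y z, f x = f y → x ≠ y → f x <+: f z → f z = f x) :
    branchLetter (f u) (f p.snd) = branchLetter (f p.penultimate) (f u) := by
  have hL := hp.three_le_length
  have hpre := prefix_getVert p hmin
  have hsnd : f u ≠ f p.snd := (p.adj_snd hp.not_nil).1
  have hlt : ∀ i, 1 ≤ i → i < p.length → (f u).length < (f (p.getVert i)).length := by
    intro i hi1 hi2
    have hne : p.getVert i ≠ u := by rw [Ne, hp.getVert_endpoint_iff (by omega)]; omega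
    have hfne : f (p.getVert i) ≠ f u := fun h =>
      hsnd ((hf _ _ p.snd h hne (by rw [h]; exact hpre 1)).trans h).symm
    exact lt_of_le_of_ne (hpre i).length_le fun h => hfne ((hpre i).eq_of_length h).symm
  have hconst : ∀ i, 1 ≤ i → i < p.length →
      (f (p.getVert i)).getD (f u).length default = (f p.snd).getD (f u).length default := by
    intro i hi1
    induction i, hi1 using Nat.le_induction with
    | base => intro _; rfl
    | succ i hi1 ih =>
      intro hi2
      rw [← ih (by omega)]
      exact (getD_eq_of_adj (p.adj_getVert_succ (by omega)) (hlt i hi1 (by omega))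
        (hlt (i + 1) (by omega) hi2) _).symm
  rw [branchLetter_of_length_lt (hlt 1 le_rfl (by omega)), branchLetter_comm,
    branchLetter_of_length_lt (hlt _ (by omega) (by omega))]
  exact (hconst _ (by omega) (by omega)).symm

theorem not_hasProperlyColoredCycle_comap
    (hf : ∀ x y z, f x = f y → x ≠ y → f x <+: f z → f z = f x) :
    ¬ HasProperlyColoredCycle ((prefixGraph (Fin c)).comap f) (prefixColoring f) := by
  classical
  rintro ⟨v, w, hw, hprop⟩
  obtain ⟨u, hu, hmin⟩ := w.support.toFinset.exists_min_image (fun z => (f z).length)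
    ⟨v, by simp⟩
  rw [List.mem_toFinset] at hu
  set p := w.rotate u hu
  have hp : p.IsCycle := hw.rotate hu
  have hpprop : IsCyclicallyProper (prefixColoring f) p.edges := by
    obtain ⟨n, hn⟩ := (w.rotate_edges u hu).symm
    rw [← hn]
    exact IsCyclicallyProper.rotate hprop n
  have hL := hp.three_le_length
  apply hpprop ⟨p.length - 1, by simp; omega⟩
  have h0 : (p.length - 1 + 1) % p.edges.length = 0 := by
    simp [Nat.sub_add_cancel (by omega : 1 ≤ p.length)]
  simp only [List.get_eq_getElem, h0, SimpleGraph.Walk.getElem_edges, prefixColoring_mk]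
  rw [Nat.sub_add_cancel (by omega), p.getVert_length, p.getVert_zero]
  exact (branchLetter_snd_eq_penultimate hp (fun z hz => hmin z (by simpa [p] using hz)) hf).symm

end Comap

section Words

variable {c k : ℕ}

def boundedWords (c k : ℕ) : Set (List (Fin c)) := {l | ∀ a, l.count a ≤ k}

def fullWord (c k : ℕ) : List (Fin c) := (List.replicate k (List.finRange c)).flatten

lemma count_fullWord (a : Fin c) : (fullWord c k).count a = k := by
  simp [fullWord, List.count_flatten]

lemma fullWord_mem_boundedWords : fullWord c k ∈ boundedWords c k :=
  fun a => (count_fullWord a).le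

lemma eq_fullWord_of_prefix {l : List (Fin c)} (hl : l ∈ boundedWords c k)
    (h : fullWord c k <+: l) : l = fullWord c k := by
  obtain ⟨_ | ⟨a, t⟩, rfl⟩ := h
  · exact List.append_nil _
  · have := hl a
    simp [List.count_append, count_fullWord] at this

lemma length_le_of_mem_boundedWords {l : List (Fin c)} (hl : l ∈ boundedWords c k) :
    l.length ≤ c * k := by
  classical
  calc l.length = ∑ a : Fin c, l.count a := by
        simpa using (Multiset.sum_count_eq_card (m := (l : Multiset (Fin c)))
          fun a _ => Finset.mem_univ a).symm
    _ ≤ ∑ _a : Fin c, k := Finset.sum_le_sum fun a _ => hl a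
    _ = c * k := by simp

lemma boundedWords_finite : (boundedWords c k).Finite :=
  (List.finite_length_le _ (c * k)).subset fun _ hl => length_le_of_mem_boundedWords hl

instance : Finite (boundedWords c k) := boundedWords_finite.to_subtype

lemma ncard_boundedWords_zero : (boundedWords c 0).ncard = 1 := by
  rw [Set.ncard_eq_one]
  refine ⟨[], Set.eq_singleton_iff_unique_mem.mpr ⟨fun a => by simp, fun l hl => ?_⟩⟩
  exact List.eq_nil_iff_forall_not_mem.mpr fun a ha => by
    simpa [List.count_eq_zero.mpr] using (hl a).trans_lt' (List.count_pos_iff.mpr ha)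

lemma lt_ncard_boundedWords [NeZero c] (k : ℕ) : k < (boundedWords c k).ncard := by
  have := Set.ncard_le_ncard_of_injOn (s := (Finset.range (k + 1) : Set ℕ))
    (t := boundedWords c k)
    (fun j => List.replicate j (0 : Fin c)) (fun j hj a => ?_) (fun i _ j _ h => ?_)
    boundedWords_finite
  · simpa using this
  · simp only [Finset.coe_range, Set.mem_Iio] at hj
    rw [List.count_replicate]
    split_ifs <;> omega
  · simpa using congrArg List.length h

lemma ncard_boundedWords_lt (hc : 2 ≤ c) (k : ℕ) :
    (boundedWords c k).ncard < c ^ (c * k + 1) := by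
  have h := List.ncard_setOf_length_le_lt (α := Fin c) (by simpa using hc) (c * k)
  rw [Fintype.card_fin] at h
  exact (Set.ncard_le_ncard (fun _ hl => length_le_of_mem_boundedWords hl)
    (List.finite_length_le _ _)).trans_lt h

lemma exists_adj_branchLetter_count_eq [NeZero c] {l : List (Fin c)}
    (hl : l ∈ boundedWords c k) {a : Fin c} {j : ℕ} (hj : j ≤ k) (hne : j ≠ l.count a) :
    ∃ l' ∈ boundedWords c k, (prefixGraph _).Adj l l' ∧ branchLetter l l' = a ∧
      l'.count a = j := by
  rcases lt_or_gt_of_ne hne with hlt | hgt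
  · obtain ⟨p, s, rfl, hp⟩ := List.exists_eq_append_cons_count_eq hlt
    refine ⟨p, fun b => ((List.prefix_append p _).sublist.count_le b).trans (hl b),
      ⟨fun h => ?_, Or.inr (List.prefix_append _ _)⟩,
      by rw [branchLetter_comm, branchLetter_append_cons], hp⟩
    simpa using congrArg List.length h
  · refine ⟨l ++ a :: List.replicate (j - l.count a - 1) a, fun b => ?_,
      ⟨fun h => by simpa using congrArg List.length h, Or.inl (List.prefix_append _ _)⟩,
      branchLetter_append_cons _ _ _, ?_⟩
    · rcases eq_or_ne b a with rfl | hba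
      · simp; omega
      · simpa [List.count_replicate, List.count_cons, hba.symm] using hl b
    · simp; omega

end Words

/-- The `k`-bounded words, with the full word replaced by `m + 1` copies of it. -/
abbrev BlowUp (c k m : ℕ) : Type := ↥(boundedWords c k \ {fullWord c k}) ⊕ Fin (m + 1)

namespace BlowUp

variable {c k m : ℕ}

def word : BlowUp c k m → List (Fin c) := Sum.elim Subtype.val fun _ => fullWord c k

lemma word_mem (x : BlowUp c k m) : x.word ∈ boundedWords c k := by
  rcases x with ⟨l, hl⟩ | _
  · exact hl.1
  · exact fullWord_mem_boundedWords

lemma exists_word_eq {l : List (Fin c)} (hl : l ∈ boundedWords c k) :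
    ∃ x : BlowUp c k m, x.word = l := by
  by_cases h : l = fullWord c k
  · exact ⟨.inr 0, h.symm⟩
  · exact ⟨.inl ⟨l, hl, h⟩, rfl⟩

lemma card (c k m : ℕ) : Nat.card (BlowUp c k m) = (boundedWords c k).ncard + m := by
  have hpos : 0 < (boundedWords c k).ncard :=
    (Set.ncard_pos boundedWords_finite).mpr ⟨_, fullWord_mem_boundedWords⟩
  rw [Nat.card_sum, Nat.card_coe_set_eq,
    Set.ncard_sdiff_singleton_of_mem fullWord_mem_boundedWords, Nat.card_fin]
  omega

abbrev graph (c k m : ℕ) : SimpleGraph (BlowUp c k m) := (prefixGraph (Fin c)).comap word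

variable [NeZero c]

theorem not_hasProperlyColoredCycle :
    ¬ HasProperlyColoredCycle (graph c k m) (prefixColoring word) := by
  refine not_hasProperlyColoredCycle_comap fun x y z hxy hne hz => ?_
  rcases x with ⟨l, hl⟩ | _ <;> rcases y with ⟨l', hl'⟩ | _
  · exact absurd (Subtype.ext hxy) (by simpa using hne)
  · exact absurd hxy hl.2
  · exact absurd hxy.symm hl'.2
  · exact eq_fullWord_of_prefix z.word_mem hz

lemma le_monDeg (x : BlowUp c k m) (a : Fin c) :
    k ≤ monDeg (graph c k m) (prefixColoring word) x a := by
  set t : Fin (k + 1) := ⟨x.word.count a, Nat.lt_succ_of_le (x.word_mem a)⟩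
  have hnbr : ∀ j : Fin k, ∃ y : BlowUp c k m, (graph c k m).Adj x y ∧
      prefixColoring word s(x, y) = a ∧ y.word.count a = t.succAbove j := by
    intro j
    obtain ⟨l, hl, hadj, hlet, hcount⟩ := exists_adj_branchLetter_count_eq x.word_mem
      (Nat.lt_succ_iff.mp (t.succAbove j).isLt) fun h => t.succAbove_ne j (Fin.ext h)
    obtain ⟨y, rfl⟩ := exists_word_eq (m := m) hl
    exact ⟨y, hadj, hlet, hcount⟩
  choose y hadj hcol hcount using hnbr
  have hinj : Function.Injective fun j => (⟨y j, hadj j, hcol j⟩ :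
      {y // (graph c k m).Adj x y ∧ prefixColoring word s(x, y) = a}) := by
    intro i j h
    apply t.succAbove_right_injective
    apply Fin.ext
    rw [← hcount, ← hcount]
    exact congrArg (fun z => z.1.word.count a) h
  rw [monDeg]
  simpa only [Nat.card_fin] using Nat.card_le_card_of_injective _ hinj

end BlowUp

end PrefixGraph

open PrefixGraph in
/-- For every `c ≥ 2` and every `n ≥ c` there is a `c`-edge-colored graph on
exactly `n` vertices with no properly colored cycle and
`δ_mon(G) + 1 ≥ (1/c)(log_c n − log_c log_c n)`; in particular
`d(n,c) ≥ (1/c)(log_c n − log_c log_c n)`. -/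
theorem dFun_lower_bound (c n : ℕ) (hc : 2 ≤ c) (hn : c ≤ n) :
    (∃ (V : Type) (_ : Fintype V) (G : SimpleGraph V) (χ : Sym2 V → Fin c),
        Nat.card V = n ∧ ¬ HasProperlyColoredCycle G χ ∧
        (1 / (c : ℝ)) * (Real.logb c n - Real.logb c (Real.logb c n)) ≤
          (minMonDeg G χ : ℝ) + 1) ∧
    (1 / (c : ℝ)) * (Real.logb c n - Real.logb c (Real.logb c n)) ≤ (dFun n c : ℝ) := by
  have : NeZero c := ⟨by omega⟩
  obtain ⟨k, hk, hk1⟩ := Nat.exists_le_and_lt_succ (N := fun k => (boundedWords c k).ncard)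
    (by simp only [ncard_boundedWords_zero]; omega) ⟨n, lt_ncard_boundedWords n⟩
  set m := n - (boundedWords c k).ncard
  have hcard : Nat.card (BlowUp c k m) = n := by rw [BlowUp.card]; omega
  have hδ : k ≤ minMonDeg (BlowUp.graph c k m) (prefixColoring BlowUp.word) :=
    le_minMonDeg BlowUp.le_monDeg
  have hbound : (1 / (c : ℝ)) * (Real.logb c n - Real.logb c (Real.logb c n)) ≤
      (minMonDeg (BlowUp.graph c k m) (prefixColoring BlowUp.word) : ℝ) + 1 := by
    have hlog := Real.logb_sub_logb_logb_le (b := c) (x := n) (e := c * (k + 1))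
      (by exact_mod_cast hc) (by exact_mod_cast hn)
      (by exact_mod_cast Nat.le_mul_of_pos_right c k.succ_pos)
      (by exact_mod_cast hk1.trans (ncard_boundedWords_lt hc (k + 1)))
    rw [one_div, inv_mul_le_iff₀ (by positivity)]
    calc _ ≤ ((c * (k + 1) : ℕ) : ℝ) := hlog
      _ ≤ _ := by push_cast; gcongr
  refine ⟨⟨_, Fintype.ofFinite _, _, _, hcard, BlowUp.not_hasProperlyColoredCycle, hbound⟩,
    hbound.trans ?_⟩
  exact_mod_cast hcard ▸ minMonDeg_lt_dFun BlowUp.not_hasProperlyColoredCycle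
end

section
/- For every integer n ≥ 2, there exists a 2-arc-colored digraph D on exactly n vertices with no properly colored directed cycle such that δ⁺_mon(D) + 1 ≥ (1/2)·(log_2 n − log_2 (log_2 n)). In particular, d⃗(n,2), the minimum k such that every 2-arc-colored digraph of order n with δ⁺_mon ≥ k has a properly colored directed cycle, satisfies d⃗(n,2) ≥ (1/2)(log_2 n − log_2 log_2 n). -/
/-- The number of arcs of color `i` with tail `x` in the `c`-arc-colored
digraph given by the arc relation `A` and coloring `col`. -/
noncomputable def monOutDeg {V : Type} {c : ℕ} (A : V → V → Prop)
    (col : V → V → Fin c) (x : V) (i : Fin c) : ℕ :=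
  Nat.card {y : V // A x y ∧ col x y = i}

/-- The minimum monochromatic out-degree `δ⁺_mon(D)` of a `c`-arc-colored
digraph. -/
noncomputable def minMonOutDeg {V : Type} {c : ℕ} (A : V → V → Prop)
    (col : V → V → Fin c) : ℕ :=
  sInf {k : ℕ | ∃ (x : V) (i : Fin c), monOutDeg A col x i = k}

/-- `v : ZMod m → V` is a properly colored directed cycle: `m ≥ 2` pairwise
distinct vertices, consecutive ones joined by arcs, and any two (cyclically)
consecutive arcs have distinct colors. -/
def IsProperlyColoredDiCycle {V : Type} {c : ℕ} (A : V → V → Prop)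
    (col : V → V → Fin c) (m : ℕ) (v : ZMod m → V) : Prop :=
  2 ≤ m ∧ Function.Injective v ∧
    (∀ i : ZMod m, A (v i) (v (i + 1))) ∧
    (∀ i : ZMod m, col (v i) (v (i + 1)) ≠ col (v (i + 1)) (v (i + 2)))

/-- The `c`-arc-colored digraph `(A, col)` has a properly colored directed
cycle. -/
def HasProperlyColoredDiCycle {V : Type} {c : ℕ} (A : V → V → Prop)
    (col : V → V → Fin c) : Prop :=
  ∃ (m : ℕ) (v : ZMod m → V), IsProperlyColoredDiCycle A col m v

/-- `d⃗(n,c)`: the minimum `k` such that every `c`-arc-colored digraph of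
order `n` with minimum monochromatic out-degree at least `k` has a properly
colored directed cycle. -/
noncomputable def dVecFun (n c : ℕ) : ℕ :=
  sInf {k : ℕ | ∀ (V : Type) (_ : Fintype V) (A : V → V → Prop) (col : V → V → Fin c),
    Irreflexive A → Nat.card V = n → k ≤ minMonOutDeg A col →
      HasProperlyColoredDiCycle A col}

/-! Vertices are words over the colour alphabet; two distinct comparable words (one a prefix of
the other) are joined by arcs in both directions, coloured by the letter of the longer word right
after the shorter one. On a properly coloured cycle take a shortest word `s`: the colours of the
two arcs at `s` are the letters at position `|s|` of its two cycle-neighbours, so these differ.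
But a word comparable with an extension of `s ++ [b]`, other than `s` and not shorter than `s`,
again extends `s ++ [b]`; so walking round the cycle from one neighbour of `s` to the other, the
letter at position `|s|` never changes.

Keeping only the words in which every letter occurs at most `k` times, a word `s` still has
`count i s` proper prefixes and `k - count i s` extensions `s ++ iʳ` reached by arcs of colour
`i`, so `δ⁺_mon ≥ k`; for two colours there are fewer than `2 ^ (2k + 1)` such words. Sources
copying the out-arcs of one vertex pad the digraph to exactly `n` vertices, and choosing
`2k + 1 ≤ ⌊log₂ n⌋ ≤ 2k + 2` gives the bound. -/

open Function

section ArcColoredDigraph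

variable {V W : Type} {c : ℕ}

theorem IsProperlyColoredDiCycle.map {A : V → V → Prop} {col : V → V → Fin c}
    {A' : W → W → Prop} {f : W → V} {m : ℕ} {v : ZMod m → W}
    (hv : IsProperlyColoredDiCycle A' (fun x y => col (f x) (f y)) m v)
    (hA : ∀ x y, A' x y → A (f x) (f y)) (hf : Injective (f ∘ v)) :
    IsProperlyColoredDiCycle A col m (f ∘ v) :=
  ⟨hv.1, hf, fun i => hA _ _ (hv.2.2.1 i), hv.2.2.2⟩

theorem le_minMonOutDeg [Nonempty V] [NeZero c] {A : V → V → Prop} {col : V → V → Fin c}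
    {k : ℕ} (h : ∀ x i, k ≤ monOutDeg A col x i) : k ≤ minMonOutDeg A col :=
  le_csInf ⟨_, Classical.arbitrary V, 0, rfl⟩ (by rintro _ ⟨x, i, rfl⟩; exact h x i)

theorem minMonOutDeg_le_card [Finite V] (A : V → V → Prop) (col : V → V → Fin c) :
    minMonOutDeg A col ≤ Nat.card V := by
  unfold minMonOutDeg
  rcases Set.eq_empty_or_nonempty {k | ∃ x i, monOutDeg A col x i = k} with h | ⟨_, x, i, rfl⟩
  · simp [h]
  · exact le_trans (Nat.sInf_le ⟨x, i, rfl⟩) (Finite.card_subtype_le _)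

theorem minMonOutDeg_lt_dVecFun [Fintype V] {A : V → V → Prop} {col : V → V → Fin c}
    (hA : Irreflexive A) (hD : ¬ HasProperlyColoredDiCycle A col) :
    minMonOutDeg A col < dVecFun (Nat.card V) c := by
  have hmem : dVecFun (Nat.card V) c ∈ _ :=
    Nat.sInf_mem ⟨Nat.card V + 1, fun W _ A' col' _ hW hk =>
      absurd (hk.trans ((minMonOutDeg_le_card A' col').trans_eq hW)) (by omega)⟩
  by_contra! h
  exact hD (hmem V ‹_› A col hA rfl h)

end ArcColoredDigraph

structure IsPCFreeWithMinDeg {V : Type} {c : ℕ} (A : V → V → Prop) (col : V → V → Fin c)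
    (k : ℕ) : Prop where
  irreflexive : Irreflexive A
  not_hasProperlyColoredDiCycle : ¬ HasProperlyColoredDiCycle A col
  le_monOutDeg : ∀ x i, k ≤ monOutDeg A col x i

section Padding

variable {V W : Type} {c : ℕ} (x₀ : V) {A : V → V → Prop} {col : V → V → Fin c}

/- Each vertex of `W` becomes a source copying the out-arcs of `x₀`; having no in-arcs, it lies on
no cycle. -/
def collapse : V ⊕ W → V := Sum.elim id fun _ => x₀

def padArc (A : V → V → Prop) (p q : V ⊕ W) : Prop :=
  q.isLeft ∧ A (collapse x₀ p) (collapse x₀ q)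

def padCol (col : V → V → Fin c) (p q : V ⊕ W) : Fin c :=
  col (collapse x₀ p) (collapse x₀ q)

theorem monOutDeg_padArc (p : V ⊕ W) (i : Fin c) :
    monOutDeg (padArc x₀ A) (padCol x₀ col) p i = monOutDeg A col (collapse x₀ p) i :=
  Nat.card_congr
    { toFun := fun q => ⟨collapse x₀ q.1, q.2.1.2, q.2.2⟩
      invFun := fun y => ⟨.inl y, ⟨rfl, y.2.1⟩, y.2.2⟩
      left_inv := by
        rintro ⟨_ | _, h⟩
        · rfl
        · exact absurd h.1.1 (by simp)
      right_inv := fun _ => rfl }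

theorem not_hasProperlyColoredDiCycle_padArc (hD : ¬ HasProperlyColoredDiCycle A col) :
    ¬ HasProperlyColoredDiCycle (padArc (W := W) x₀ A) (padCol x₀ col) := by
  rintro ⟨m, v, hv⟩
  have hleft (i : ZMod m) : ∃ y, v i = .inl y :=
    Sum.isLeft_iff.mp (by simpa using (hv.2.2.1 (i - 1)).1)
  refine hD ⟨m, _, hv.map (f := collapse x₀) (col := col) (fun _ _ h => h.2) ?_⟩
  intro i j hij
  obtain ⟨y, hy⟩ := hleft i
  obtain ⟨z, hz⟩ := hleft j
  refine hv.2.1 ?_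
  simp_all [collapse]

theorem IsPCFreeWithMinDeg.pad {k : ℕ} (h : IsPCFreeWithMinDeg A col k) :
    IsPCFreeWithMinDeg (padArc (W := W) x₀ A) (padCol x₀ col) k where
  irreflexive p hp := by
    obtain ⟨y, rfl⟩ := Sum.isLeft_iff.mp hp.1
    exact h.irreflexive y hp.2
  not_hasProperlyColoredDiCycle := not_hasProperlyColoredDiCycle_padArc x₀ h.2
  le_monOutDeg p i := (monOutDeg_padArc x₀ p i).symm ▸ h.le_monOutDeg _ i

theorem IsPCFreeWithMinDeg.exists_card_eq [Finite V] [Nonempty V] {k n : ℕ}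
    (h : IsPCFreeWithMinDeg A col k) (hn : Nat.card V ≤ n) :
    ∃ (V' : Type) (_ : Fintype V') (A' : V' → V' → Prop) (col' : V' → V' → Fin c),
      Nat.card V' = n ∧ IsPCFreeWithMinDeg A' col' k :=
  ⟨V ⊕ Fin (n - Nat.card V), Fintype.ofFinite _, _, _,
    by rw [Nat.card_sum, Nat.card_fin]; omega,
    h.pad (Classical.arbitrary V)⟩

end Padding

namespace List

variable {α : Type} {p s u w : List α}

theorem prefix_of_comparable_of_length_le (h : s <+: w ∨ w <+: s) (hl : s.length ≤ w.length) :
    s <+: w := by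
  rcases h with h | h
  · exact h
  · rw [h.eq_of_length (le_antisymm h.length_le hl)]

theorem append_getD_prefix (h : s <+: w) (hne : w ≠ s) (d : α) :
    s ++ [w.getD s.length d] <+: w := by
  obtain ⟨_ | ⟨a, r⟩, rfl⟩ := h
  · simp at hne
  · simp

theorem append_singleton_prefix_of_comparable {b : α} (hu : p ++ [b] <+: u)
    (huw : u <+: w ∨ w <+: u) (hw : p.length ≤ w.length) (hne : w ≠ p) : p ++ [b] <+: w := by
  rcases huw with h | h
  · exact hu.trans h
  · have hp : p <+: w := prefix_of_prefix_length_le ((prefix_append _ _).trans hu) h hw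
    have : p.length ≠ w.length := fun e => hne (hp.eq_of_length e).symm
    exact prefix_of_prefix_length_le hu h (by simp; omega)

end List

section PrefixDigraph

variable {α : Type} {c : ℕ} [NeZero c]

def prefixArc (s t : List α) : Prop := s ≠ t ∧ (s <+: t ∨ t <+: s)

/-- On comparable words, the letter of the longer one right after the shorter one. The default `0`
is read only for words of equal length, which are never joined by an arc. -/
def prefixColor (s t : List (Fin c)) : Fin c :=
  if s.length < t.length then t.getD s.length 0 else s.getD t.length 0

theorem prefixColor_comm (s t : List (Fin c)) : prefixColor s t = prefixColor t s := by
  unfold prefixColor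
  rcases lt_trichotomy s.length t.length with h | h | h
  · simp [h, h.not_gt]
  · simp [h]
  · simp [h, h.not_gt]

theorem prefixColor_of_append_singleton_prefix {s t : List (Fin c)} {b : Fin c}
    (h : s ++ [b] <+: t) : prefixColor s t = b := by
  obtain ⟨r, rfl⟩ := h
  simp [prefixColor]

theorem not_hasProperlyColoredDiCycle_prefixArc :
    ¬ HasProperlyColoredDiCycle (prefixArc (α := Fin c)) prefixColor := by
  rintro ⟨m, v, hm, hinj, harc, hcol⟩
  have : NeZero m := ⟨by omega⟩
  obtain ⟨i₀, -, hmin⟩ :=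
    Finset.univ.exists_min_image (fun i => (v i).length) Finset.univ_nonempty
  set s := v i₀
  have hlen (i : ZMod m) : s.length ≤ (v i).length := hmin i (Finset.mem_univ i)
  have hne (j : ℕ) (h0 : 0 < j) (hj : j < m) : v (i₀ + j) ≠ s := fun h => by
    have hj0 : ((j : ℕ) : ZMod m) = 0 := by simpa using hinj h
    rw [ZMod.natCast_eq_zero_iff] at hj0
    exact absurd (Nat.le_of_dvd h0 hj0) (by omega)
  set b := (v (i₀ + 1)).getD s.length 0
  -- The words `v (i₀ + j)`, `0 < j < m`, are not `s`, so they all extend `s ++ [b]`.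
  have hwalk (j : ℕ) (h1 : 1 ≤ j) : j < m → s ++ [b] <+: v (i₀ + j) := by
    induction j, h1 using Nat.le_induction with
    | base =>
      intro hm1
      rw [Nat.cast_one]
      exact List.append_getD_prefix
        (List.prefix_of_comparable_of_length_le (harc i₀).2 (hlen _))
        (by simpa using hne 1 one_pos hm1) 0
    | succ j h1 ih =>
      intro hj
      have hcomp := (harc (i₀ + j)).2
      rw [show i₀ + (j : ZMod m) + 1 = i₀ + ((j + 1 : ℕ) : ZMod m) by push_cast; ring]
        at hcomp
      exact List.append_singleton_prefix_of_comparable (ih (by omega)) hcomp (hlen _)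
        (hne _ (by omega) hj)
  have hlast := hwalk (m - 1) (by omega) (by omega)
  rw [show i₀ + ((m - 1 : ℕ) : ZMod m) = i₀ - 1 by
    simp [Nat.cast_sub (by omega : 1 ≤ m)]; ring] at hlast
  apply hcol (i₀ - 1)
  rw [sub_add_cancel, show i₀ - 1 + 2 = i₀ + 1 by ring, prefixColor_comm,
    prefixColor_of_append_singleton_prefix hlast,
    prefixColor_of_append_singleton_prefix (by simpa using hwalk 1 le_rfl (by omega))]

end PrefixDigraph

theorem card_subtype_length_le_le (α : Type) [Fintype α] (L : ℕ) :
    Nat.card {l : List α // l.length ≤ L} ≤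
      ∑ j ∈ Finset.range (L + 1), Fintype.card α ^ j := by
  have hinj : Injective fun l : {l : List α // l.length ≤ L} =>
      (⟨⟨l.1.length, Nat.lt_succ_of_le l.2⟩, ⟨l.1, rfl⟩⟩ :
        Σ j : Fin (L + 1), List.Vector α j) :=
    Injective.of_comp (f := fun p => p.2.toList) Subtype.val_injective
  calc _ ≤ Nat.card (Σ j : Fin (L + 1), List.Vector α j) :=
        Nat.card_le_card_of_injective _ hinj
    _ = _ := by simp [Nat.card_eq_fintype_card, card_vector, Fin.sum_univ_eq_sum_range]

section BoundedWords

variable {c k : ℕ}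

abbrev BoundedWords (c k : ℕ) : Type := {s : List (Fin c) // ∀ i, s.count i ≤ k}

theorem setOf_count_le_subset :
    {s : List (Fin c) | ∀ i, s.count i ≤ k} ⊆ {l | l.length ≤ c * k} := fun s hs =>
  calc s.length = ∑ i, s.count i := by
        simpa using (Multiset.sum_count_eq_card (s := Finset.univ) (m := (s : Multiset (Fin c)))
          (by simp)).symm
    _ ≤ ∑ _ : Fin c, k := Finset.sum_le_sum fun i _ => hs i
    _ = c * k := by simp

instance : Finite (BoundedWords c k) :=
  have := (List.finite_length_le (Fin c) (c * k)).to_subtype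
  Finite.Set.subset _ setOf_count_le_subset

theorem card_boundedWords_le :
    Nat.card (BoundedWords c k) ≤ ∑ j ∈ Finset.range (c * k + 1), c ^ j := by
  have : Finite {l : List (Fin c) // l.length ≤ c * k} :=
    (List.finite_length_le (Fin c) (c * k)).to_subtype
  calc _ ≤ Nat.card {l : List (Fin c) // l.length ≤ c * k} :=
        Nat.card_le_card_of_injective _ (Set.inclusion_injective setOf_count_le_subset)
    _ ≤ _ := by simpa using card_subtype_length_le_le (Fin c) (c * k)

end BoundedWords

section Neighbours

variable {c k : ℕ} [NeZero c] {s : List (Fin c)}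

theorem exists_shorter_neighbours (hs : ∀ j, s.count j ≤ k) (i : Fin c) :
    ∃ N : Finset (List (Fin c)), N.card = s.count i ∧ ∀ t ∈ N, t.length < s.length ∧
      (∀ j, t.count j ≤ k) ∧ prefixArc s t ∧ prefixColor s t = i := by
  refine ⟨(s.idxsOf i).toFinset.image s.take, ?_, ?_⟩
  · rw [Finset.card_image_of_injOn, List.toFinset_card_of_nodup List.nodup_idxsOf,
      List.length_idxsOf]
    intro p hp q hq h
    have hps := List.lt_add_of_mem_idxsOf p (List.mem_toFinset.mp hp)
    have hqs := List.lt_add_of_mem_idxsOf q (List.mem_toFinset.mp hq)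
    have := congrArg List.length h
    simp only [List.length_take] at this
    omega
  · simp only [Finset.mem_image, List.mem_toFinset]
    rintro _ ⟨p, hp, rfl⟩
    obtain ⟨hps, hpi⟩ := List.mem_idxsOf_iff_exists_getElem_pos.mp hp
    have hlt : (s.take p).length < s.length := by simpa
    have hne : s ≠ s.take p := fun h => by rw [← h] at hlt; exact lt_irrefl _ hlt
    refine ⟨hlt, fun j => ((List.take_prefix p s).sublist.count_le j).trans (hs j),
      ⟨hne, Or.inr (List.take_prefix p s)⟩, ?_⟩
    rw [prefixColor_comm]
    apply prefixColor_of_append_singleton_prefix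
    simpa [Nat.min_eq_left hps.le, List.getElem?_eq_getElem hps, beq_iff_eq.mp hpi] using
      List.append_getD_prefix (List.take_prefix p s) hne 0

theorem exists_longer_neighbours (hs : ∀ j, s.count j ≤ k) (i : Fin c) :
    ∃ N : Finset (List (Fin c)), N.card = k - s.count i ∧ ∀ t ∈ N, s.length < t.length ∧
      (∀ j, t.count j ≤ k) ∧ prefixArc s t ∧ prefixColor s t = i := by
  refine ⟨(Finset.Icc 1 (k - s.count i)).image fun r => s ++ List.replicate r i, ?_, ?_⟩
  · rw [Finset.card_image_of_injective _ fun r r' h => by simpa using congrArg List.length h]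
    simp
  · simp only [Finset.mem_image, Finset.mem_Icc]
    rintro _ ⟨_ | r, ⟨hr1, hrk⟩, rfl⟩
    · omega
    refine ⟨by simp, fun j => ?_, ⟨fun h => by simpa using congrArg List.length h,
      Or.inl (List.prefix_append _ _)⟩, prefixColor_of_append_singleton_prefix ?_⟩
    · have := hs j
      rw [List.count_append, List.count_replicate]
      split_ifs with h
      · obtain rfl := beq_iff_eq.mp h
        omega
      · omega
    · simp [List.replicate_succ]

end Neighbours

section BoundedWordsDigraph

variable {c k : ℕ} [NeZero c]

theorem le_monOutDeg_boundedWords (x : BoundedWords c k) (i : Fin c) :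
    k ≤ monOutDeg (fun x y : BoundedWords c k => prefixArc x.1 y.1)
      (fun x y => prefixColor x.1 y.1) x i := by
  obtain ⟨N₁, hN₁, hmem₁⟩ := exists_shorter_neighbours x.2 i
  obtain ⟨N₂, hN₂, hmem₂⟩ := exists_longer_neighbours x.2 i
  have hdisj : Disjoint N₁ N₂ := Finset.disjoint_left.mpr fun t h₁ h₂ =>
    (hmem₁ t h₁).1.asymm (hmem₂ t h₂).1
  have hmem (t) (ht : t ∈ N₁ ∪ N₂) :=
    (Finset.mem_union.mp ht).elim (fun h => (hmem₁ t h).2) (fun h => (hmem₂ t h).2)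
  calc k = Nat.card ↥(N₁ ∪ N₂) := by
        rw [Nat.card_eq_fintype_card, Fintype.card_coe, Finset.card_union_of_disjoint hdisj,
          hN₁, hN₂, Nat.add_sub_cancel' (x.2 i)]
    _ ≤ _ :=
        Nat.card_le_card_of_injective (fun t => ⟨⟨t, (hmem t t.2).1⟩, (hmem t t.2).2⟩)
          fun t t' h => Subtype.ext (congrArg (fun y => y.1.1) h)

theorem isPCFreeWithMinDeg_boundedWords :
    IsPCFreeWithMinDeg (fun x y : BoundedWords c k => prefixArc x.1 y.1)
      (fun x y => prefixColor x.1 y.1) k where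
  irreflexive _ h := h.1 rfl
  not_hasProperlyColoredDiCycle := fun ⟨m, _, hv⟩ => not_hasProperlyColoredDiCycle_prefixArc
    ⟨m, _, hv.map (fun _ _ h => h) (Subtype.val_injective.comp hv.2.1)⟩
  le_monOutDeg := le_monOutDeg_boundedWords

end BoundedWordsDigraph

theorem card_boundedWords_two_lt (k : ℕ) : Nat.card (BoundedWords 2 k) < 2 ^ (2 * k + 1) :=
  calc Nat.card (BoundedWords 2 k) ≤ ∑ j ∈ Finset.range (2 * k + 1), 2 ^ j :=
        card_boundedWords_le
    _ = 2 ^ (2 * k + 1) - 1 := by rw [Nat.geomSum_eq le_rfl]; simp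
    _ < 2 ^ (2 * k + 1) := Nat.sub_lt (Nat.two_pow_pos _) one_pos

theorem sub_logb_two_le {x : ℝ} {N : ℕ} (hN : 2 ≤ N) (hx : 1 ≤ x) (hxN : x < N + 1) :
    x - Real.logb 2 x ≤ N := by
  rcases le_or_gt x N with h | h
  · linarith [Real.logb_nonneg one_lt_two hx]
  · have h2 : (2 : ℝ) ≤ x := by exact_mod_cast (Nat.cast_le.mpr hN).trans h.le
    have : 1 ≤ Real.logb 2 x := by
      rwa [Real.le_logb_iff_rpow_le one_lt_two (by linarith), Real.rpow_one]
    linarith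

theorem exists_two_pow_le_and_half_sub_logb_le {n : ℕ} (hn : 2 ≤ n) :
    ∃ k : ℕ, 2 ^ (2 * k + 1) ≤ n ∧
      (1 / 2 : ℝ) * (Real.logb 2 n - Real.logb 2 (Real.logb 2 n)) ≤ k + 1 := by
  have hL : 1 ≤ Nat.log 2 n := Nat.log_pos one_lt_two hn
  obtain ⟨k, hkL, hLk⟩ : ∃ k, 2 * k + 1 ≤ Nat.log 2 n ∧ Nat.log 2 n ≤ 2 * k + 2 :=
    ⟨(Nat.log 2 n - 1) / 2, by omega, by omega⟩
  refine ⟨k, (Nat.pow_le_pow_right two_pos hkL).trans (Nat.pow_log_le_self 2 (by omega)), ?_⟩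
  have hlow : (Nat.log 2 n : ℝ) ≤ Real.logb 2 n := by exact_mod_cast Real.natLog_le_logb n 2
  have hup : Real.logb 2 n < Nat.log 2 n + 1 := by
    have hfloor : ⌊Real.logb 2 n⌋₊ = Nat.log 2 n := by
      exact_mod_cast Real.natFloor_logb_natCast 2 n
    exact hfloor ▸ Nat.lt_floor_add_one (Real.logb 2 n)
  have := sub_logb_two_le (N := 2 * k + 2) (by omega) (le_trans (by exact_mod_cast hL) hlow)
    (hup.trans_le (by exact_mod_cast Nat.succ_le_succ hLk))
  push_cast at this
  linarith

/-- For every `n ≥ 2` there is a `2`-arc-colored digraph on exactly `n`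
vertices with no properly colored directed cycle and
`δ⁺_mon(D) + 1 ≥ (1/2)(log₂ n − log₂ log₂ n)`; in particular
`d⃗(n,2) ≥ (1/2)(log₂ n − log₂ log₂ n)`. -/
theorem dVecFun_two_lower_bound (n : ℕ) (hn : 2 ≤ n) :
    (∃ (V : Type) (_ : Fintype V) (A : V → V → Prop) (col : V → V → Fin 2),
        Irreflexive A ∧ Nat.card V = n ∧ ¬ HasProperlyColoredDiCycle A col ∧
        (1 / 2 : ℝ) * (Real.logb 2 n - Real.logb 2 (Real.logb 2 n)) ≤
          (minMonOutDeg A col : ℝ) + 1) ∧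
    (1 / 2 : ℝ) * (Real.logb 2 n - Real.logb 2 (Real.logb 2 n)) ≤ (dVecFun n 2 : ℝ) := by
  obtain ⟨k, hkn, hk⟩ := exists_two_pow_le_and_half_sub_logb_le hn
  have : Nonempty (BoundedWords 2 k) := ⟨⟨[], by simp⟩⟩
  obtain ⟨V, hVfin, A, col, hV, hD⟩ :=
    isPCFreeWithMinDeg_boundedWords.exists_card_eq ((card_boundedWords_two_lt k).le.trans hkn)
  have : Nonempty V := (Nat.card_pos_iff.mp (by omega)).1
  have hmin : k ≤ minMonOutDeg A col := le_minMonOutDeg hD.le_monOutDeg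
  have hlt : minMonOutDeg A col < dVecFun n 2 :=
    hV ▸ minMonOutDeg_lt_dVecFun hD.irreflexive hD.not_hasProperlyColoredDiCycle
  refine ⟨⟨V, hVfin, A, col, hD.irreflexive, hV, hD.not_hasProperlyColoredDiCycle,
    hk.trans (by exact_mod_cast Nat.add_le_add_right hmin 1)⟩, hk.trans ?_⟩
  exact_mod_cast hmin.trans_lt hlt
end
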